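/- arXiv:1608.01512 — 6 statements merged into one kernel-verified Lean document; each statement's English description precedes it below -/
import Mathlib

section
/- Let G be a commutative cancellative semigroup of uncountable cardinality. Then G ↛ [ℵ₁]^{FS}_{ℵ₀} holds; that is, there exists a colouring c : G → ℕ such that for every uncountable subset X ⊆ G and every k ∈ ℕ, there is a nonempty finite subset a ⊆ X with c(∑_{x∈a} x) = k. -/
/-!
Through the Grothendieck group of `WithZero G`, the semigroup `G` embeds into an abelian group
`A`, and `A` embeds into the direct sum `A →₀ ℚ × ℚ/ℤ`: by Zorn's lemma, a partial embedding whose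
values are supported on its domain extends past any `a` outside the domain, using divisibility
for the old coordinates and the fresh coordinate `a` for a character detecting the class of `a`.

Colour a finitely supported function by the dyadic scale `⌊log₂ |supp v|⌋`, read through a
pairing function so that each colour recurs on arbitrarily large scales. If `X` is uncountable,
so is the family of supports, and the Δ-system lemma gives infinitely many elements of `X` whose
supports meet pairwise in a root `R` and have petals of a common size `s`. A sum of `N + 1` of
them has support size between `(N + 1) s` and `(N + 1) s + |R|`, which fits into any dyadic
interval `[2 ^ j, 2 ^ (j + 1))` with `s + |R| < 2 ^ j`.
-/

open Cardinal

/-- Sum of `n+1` elements of an additive commutative semigroup. -/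
def sgSum {G : Type*} [AddCommSemigroup G] : (n : ℕ) → (Fin (n + 1) → G) → G
  | 0, x => x 0
  | n + 1, x => sgSum n (fun i => x i.castSucc) + x (Fin.last (n + 1))

/-- `FS(X)`: all sums of finitely many (at least one) pairwise distinct elements of `X`. -/
def FS {G : Type*} [AddCommSemigroup G] (X : Set G) : Set G :=
  {g | ∃ (n : ℕ) (x : Fin (n + 1) → G),
    Function.Injective x ∧ (∀ i, x i ∈ X) ∧ sgSum n x = g}

open Function

theorem sgSum_eq_sum {M : Type*} [AddCommMonoid M] :
    ∀ (n : ℕ) (x : Fin (n + 1) → M), sgSum n x = ∑ i, x i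
  | 0, x => by simp [sgSum]
  | n + 1, x => by rw [sgSum, sgSum_eq_sum n, Fin.sum_univ_castSucc (f := x)]

theorem map_sgSum {G H : Type*} [AddCommSemigroup G] [AddCommSemigroup H] (φ : G →ₙ+ H) :
    ∀ (n : ℕ) (x : Fin (n + 1) → G), φ (sgSum n x) = sgSum n (φ ∘ x)
  | 0, _ => rfl
  | n + 1, x => by rw [sgSum, map_add, map_sgSum φ n]; rfl

theorem FS_image_subset {G H : Type*} [AddCommSemigroup G] [AddCommSemigroup H] (φ : G →ₙ+ H)
    (X : Set G) : FS (φ '' X) ⊆ φ '' FS X := by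
  rintro _ ⟨n, x, hx, hxX, rfl⟩
  choose g hgX hgx using hxX
  refine ⟨sgSum n g, ⟨n, g, fun i j h => hx ?_, hgX, rfl⟩, ?_⟩
  · rw [← hgx i, ← hgx j, h]
  · rw [map_sgSum]
    exact congrArg (sgSum n) (funext hgx)

namespace Set

variable {α β : Type*}

theorem Countable.of_image_of_countable_fibers {s : Set α} {f : α → β}
    (hs : (f '' s).Countable) (hf : ∀ b, (s ∩ f ⁻¹' {b}).Countable) : s.Countable :=
  (hs.biUnion fun b _ => hf b).mono fun x hx =>
    mem_biUnion (mem_image_of_mem f hx) (show x ∈ s ∩ f ⁻¹' {f x} from ⟨hx, rfl⟩)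

theorem exists_not_countable_inter_preimage_singleton [Countable β] {s : Set α}
    (hs : ¬ s.Countable) (f : α → β) : ∃ b, ¬ (s ∩ f ⁻¹' {b}).Countable := by
  by_contra! h
  exact hs (Countable.of_image_of_countable_fibers (to_countable _) h)

end Set

section DeltaSystem

open Set

variable {ι : Type*}

theorem Finset.exists_not_countable_pairwise_disjoint {𝒜 : Set (Finset ι)} (h𝒜 : ¬ 𝒜.Countable)
    (hempty : ∅ ∉ 𝒜) (hpt : ∀ i, {S ∈ 𝒜 | i ∈ S}.Countable) :
    ∃ ℬ ⊆ 𝒜, ¬ ℬ.Countable ∧ ℬ.Pairwise Disjoint := by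
  obtain ⟨𝒟, -, h𝒟max⟩ := zorn_subset_nonempty {ℬ | ℬ ⊆ 𝒜 ∧ ℬ.Pairwise Disjoint}
    (fun c hc hchain _ => ⟨⋃₀ c,
      ⟨sUnion_subset fun ℬ hℬ => (hc hℬ).1,
        (Set.pairwise_sUnion hchain.directedOn).2 fun ℬ hℬ => (hc hℬ).2⟩,
      fun _ => subset_sUnion_of_mem⟩) ∅ ⟨Set.empty_subset _, pairwise_empty _⟩
  refine ⟨𝒟, h𝒟max.prop.1, fun h𝒟 => h𝒜 ?_, h𝒟max.prop.2⟩
  -- the members of `𝒜` meeting `⋃ 𝒟` form a countable set; any other member could be added to `𝒟`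
  refine ((h𝒟.biUnion fun T _ => T.countable_toSet).biUnion fun i _ => hpt i).mono fun S hS => ?_
  by_contra hmeet
  have hdisj : ∀ T ∈ 𝒟, Disjoint S T := fun T hT => Finset.disjoint_left.2 fun i hiS hiT =>
    hmeet (Set.mem_biUnion (Set.mem_biUnion hT hiT) ⟨hS, hiS⟩)
  have hS𝒟 : S ∉ 𝒟 := fun hS𝒟 => by
    obtain ⟨i, hi⟩ := Finset.nonempty_iff_ne_empty.2 (ne_of_mem_of_not_mem hS hempty)
    exact hmeet (Set.mem_biUnion (Set.mem_biUnion hS𝒟 hi) ⟨hS, hi⟩)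
  have hins : insert S 𝒟 ∈ {ℬ | ℬ ⊆ 𝒜 ∧ ℬ.Pairwise Disjoint} :=
    ⟨Set.insert_subset hS h𝒟max.prop.1, pairwise_insert_of_symm.2
      ⟨h𝒟max.prop.2, fun T hT _ => hdisj T hT⟩⟩
  exact hS𝒟 (h𝒟max.2 hins (Set.subset_insert S 𝒟) (Set.mem_insert S 𝒟))

theorem Finset.exists_not_countable_deltaSystem [DecidableEq ι] :
    ∀ (n : ℕ) {𝒜 : Set (Finset ι)}, ¬ 𝒜.Countable → (∀ S ∈ 𝒜, S.card = n) →
      ∃ (R : Finset ι), ∃ ℬ ⊆ 𝒜, ¬ ℬ.Countable ∧ ℬ.Pairwise fun S T => S ∩ T = R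
  | 0, 𝒜, h𝒜, hcard => absurd ((countable_singleton ∅).mono fun S hS =>
      Finset.card_eq_zero.1 (hcard S hS)) h𝒜
  | n + 1, 𝒜, h𝒜, hcard => by
    by_cases hpt : ∀ i, {S ∈ 𝒜 | i ∈ S}.Countable
    · obtain ⟨ℬ, hℬ𝒜, hℬ, hdisj⟩ := exists_not_countable_pairwise_disjoint h𝒜
        (fun h => by simpa using hcard ∅ h) hpt
      exact ⟨∅, ℬ, hℬ𝒜, hℬ, hdisj.mono' fun S T => Finset.disjoint_iff_inter_eq_empty.1⟩
    push Not at hpt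
    obtain ⟨i, hi⟩ := hpt
    have hinj : InjOn (Finset.erase · i) {S ∈ 𝒜 | i ∈ S} := fun S hS T hT h => by
      rw [← Finset.insert_erase hS.2, ← Finset.insert_erase hT.2]
      exact congrArg (insert i) h
    obtain ⟨R, ℬ, hℬ, hℬc, hℬR⟩ := exists_not_countable_deltaSystem n
      (fun h => hi (countable_of_injective_of_countable_image hinj h))
      (by rintro _ ⟨S, hS, rfl⟩; rw [Finset.card_erase_of_mem hS.2, hcard S hS.1]; rfl)
    have hiℬ : ∀ S ∈ ℬ, i ∉ S := fun S hS => by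
      obtain ⟨T, -, rfl⟩ := hℬ hS
      exact Finset.notMem_erase i T
    refine ⟨insert i R, insert i '' ℬ, ?_, fun h => hℬc ?_, ?_⟩
    · rintro _ ⟨S, hS, rfl⟩
      obtain ⟨T, hT, rfl⟩ := hℬ hS
      rw [Finset.insert_erase hT.2]
      exact hT.1
    · refine (h.image (Finset.erase · i)).mono fun S hS => ?_
      exact ⟨insert i S, Set.mem_image_of_mem _ hS, Finset.erase_insert (hiℬ S hS)⟩
    · rintro _ ⟨S, hS, rfl⟩ _ ⟨T, hT, rfl⟩ hST
      rw [← Finset.insert_inter_distrib, hℬR hS hT fun h => hST (congrArg _ h)]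

end DeltaSystem

section Colouring

open Set

variable {ι κ M : Type*} [AddCommMonoid M]

theorem Finsupp.countable_setOf_support_subset [Countable M] (S : Finset ι) :
    {v : ι →₀ M | v.support ⊆ S}.Countable := by
  refine countable_of_injective_of_countable_image (f := fun v (i : S) => v i)
    (fun v hv w hw h => Finsupp.ext fun i => ?_) (to_countable _)
  by_cases hi : i ∈ S
  · exact congrFun h ⟨i, hi⟩
  · rw [Finsupp.notMem_support_iff.1 fun h => hi (hv h),
      Finsupp.notMem_support_iff.1 fun h => hi (hw h)]

/-- For finitely supported functions whose supports form a Δ-system with root `R`, the support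
of the sum consists of all the petals and part of the root. -/
theorem Finsupp.card_support_sum_mem_Icc [DecidableEq ι] (t : Finset κ) (v : κ → ι →₀ M)
    (R : Finset ι) (hR : (t : Set κ).Pairwise fun i j => (v i).support ∩ (v j).support = R) :
    (∑ i ∈ t, v i).support.card ∈
      Icc (∑ i ∈ t, ((v i).support \ R).card) (R.card + ∑ i ∈ t, ((v i).support \ R).card) := by
  have hpetal : ∀ i ∈ t, ∀ j ∈ t, i ≠ j → ∀ x ∈ (v i).support \ R, x ∉ (v j).support :=
    fun i hi j hj hij x hx hxj => (Finset.mem_sdiff.1 hx).2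
      (hR hi hj hij ▸ Finset.mem_inter.2 ⟨(Finset.mem_sdiff.1 hx).1, hxj⟩)
  have hdisj : (t : Set κ).PairwiseDisjoint fun i => (v i).support \ R :=
    fun i hi j hj hij => Finset.disjoint_left.2 fun x hx hxj =>
      hpetal i hi j hj hij x hx (Finset.mem_sdiff.1 hxj).1
  rw [← Finset.card_biUnion hdisj]
  constructor
  · refine Finset.card_le_card fun x hx => ?_
    obtain ⟨i, hi, hx⟩ := Finset.mem_biUnion.1 hx
    rw [Finsupp.mem_support_iff, Finsupp.finsetSum_apply,
      Finset.sum_eq_single_of_mem i hi fun j hj hji =>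
        Finsupp.notMem_support_iff.1 (hpetal i hi j hj hji.symm x hx)]
    exact Finsupp.mem_support_iff.1 (Finset.mem_sdiff.1 hx).1
  · refine (Finset.card_le_card fun x hx => ?_).trans (Finset.card_union_le _ _)
    obtain ⟨i, hi, hx⟩ := Finset.mem_biUnion.1 (Finsupp.support_finsetSum hx)
    by_cases hxR : x ∈ R
    · exact Finset.mem_union_left _ hxR
    · exact Finset.mem_union_right _ (Finset.mem_biUnion.2 ⟨i, hi, Finset.mem_sdiff.2 ⟨hx, hxR⟩⟩)

theorem exists_deltaSystem_seq [DecidableEq ι] [Countable M] {Y : Set (ι →₀ M)}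
    (hY : ¬ Y.Countable) :
    ∃ (R : Finset ι) (s : ℕ) (y : ℕ → ι →₀ M), 0 < s ∧ Injective y ∧ (∀ m, y m ∈ Y) ∧
      (∀ m, ((y m).support \ R).card = s) ∧
      Pairwise fun m m' => (y m).support ∩ (y m').support = R := by
  have hsupp : ¬ (Finsupp.support '' Y).Countable := fun h =>
    hY (h.of_image_of_countable_fibers fun S => (Finsupp.countable_setOf_support_subset S).mono
      fun v hv => hv.2.subset)
  obtain ⟨n, hn⟩ := exists_not_countable_inter_preimage_singleton hsupp Finset.card
  obtain ⟨R, ℬ, hℬ, hℬc, hℬR⟩ :=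
    Finset.exists_not_countable_deltaSystem n hn fun S hS => hS.2
  have hinf : (ℬ \ {R}).Infinite := fun h => hℬc ((h.countable.union (countable_singleton R)).mono
    fun S hS => (em (S = R)).elim Or.inr fun h => Or.inl ⟨hS, h⟩)
  let S : ℕ → Finset ι := fun m => hinf.natEmbedding _ m
  have hSℬ : ∀ m, S m ∈ ℬ ∧ S m ≠ R := fun m => (hinf.natEmbedding _ m).2
  have hSinj : Injective S := fun m m' h => (hinf.natEmbedding _).injective (Subtype.ext h)
  have hSR : ∀ m m', m ≠ m' → S m ∩ S m' = R := fun m m' h => hℬR (hSℬ m).1 (hSℬ m').1 (hSinj.ne h)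
  have hRS : ∀ m, R ⊂ S m := fun m => Finset.ssubset_iff_subset_ne.2
    ⟨hSR m (m + 1) m.succ_ne_self.symm ▸ Finset.inter_subset_left, (hSℬ m).2.symm⟩
  choose y hyY hyS using fun m => (hℬ (hSℬ m).1).1
  refine ⟨R, n - R.card, y, ?_, fun m m' h => hSinj (by rw [← hyS, ← hyS, h]), hyY,
    fun m => ?_, fun m m' h => ?_⟩
  · have := Finset.card_lt_card (hRS 0)
    rw [(hℬ (hSℬ 0).1).2] at this
    omega
  · rw [hyS, Finset.card_sdiff_of_subset (hRS m).subset, (hℬ (hSℬ m).1).2]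
  · simp only [hyS, hSR m m' h]

theorem exists_mem_FS_card_support_mem_Icc [Countable M] {Y : Set (ι →₀ M)}
    (hY : ¬ Y.Countable) :
    ∃ s r : ℕ, 0 < s ∧
      ∀ N : ℕ, ∃ g ∈ FS Y, g.support.card ∈ Icc ((N + 1) * s) (r + (N + 1) * s) := by
  classical
  obtain ⟨R, s, y, hs, hyinj, hyY, hycard, hyR⟩ := exists_deltaSystem_seq hY
  refine ⟨s, R.card, hs, fun N => ⟨∑ i : Fin (N + 1), y i,
    ⟨N, fun i => y i, hyinj.comp Fin.val_injective, fun i => hyY i, sgSum_eq_sum _ _⟩, ?_⟩⟩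
  have h := Finsupp.card_support_sum_mem_Icc Finset.univ (fun i : Fin (N + 1) => y i) R
    fun i _ j _ hij => hyR (Fin.val_injective.ne hij)
  simpa only [hycard, Finset.sum_const, Finset.card_univ, Fintype.card_fin, smul_eq_mul] using h

theorem exists_mul_mem_Ico_two_pow {s r j : ℕ} (hs : 0 < s) (hj : s + r < 2 ^ j) :
    ∃ N : ℕ, 2 ^ j ≤ (N + 1) * s ∧ r + (N + 1) * s < 2 ^ (j + 1) := by
  have hlt := Nat.lt_div_mul_add (a := 2 ^ j) hs
  have hle := Nat.div_mul_le_self (2 ^ j) s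
  exact ⟨2 ^ j / s, by rw [add_mul, one_mul]; omega, by rw [add_mul, one_mul, pow_succ]; omega⟩

/-- Through `Nat.unpair`, every colour recurs at arbitrarily large dyadic scales of the size of
the support. -/
noncomputable def colour (v : ι →₀ M) : ℕ :=
  (Nat.unpair (Nat.log 2 v.support.card)).1

theorem exists_mem_FS_colour_eq [Countable M] {Y : Set (ι →₀ M)} (hY : ¬ Y.Countable) (k : ℕ) :
    ∃ g ∈ FS Y, colour g = k := by
  obtain ⟨s, r, hs, hFS⟩ := exists_mem_FS_card_support_mem_Icc hY
  have hj : s + r < 2 ^ Nat.pair k (s + r) :=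
    (Nat.right_le_pair k (s + r)).trans_lt Nat.lt_two_pow_self
  obtain ⟨N, hlow, hhigh⟩ := exists_mul_mem_Ico_two_pow hs hj
  obtain ⟨g, hg, hglow, hghigh⟩ := hFS N
  refine ⟨g, hg, ?_⟩
  rw [colour, Nat.log_eq_of_pow_le_of_lt_pow (hlow.trans hglow) (hghigh.trans_lt hhigh),
    Nat.unpair_pair]

end Colouring

section Embedding

/-- A countable divisible group into which every cyclic group embeds. -/
abbrev QCircle : Type := ℚ × AddCircle (1 : ℚ)

instance : Countable (AddCircle (1 : ℚ)) := QuotientAddGroup.mk_surjective.countable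

theorem ZMod.exists_addMonoidHom_qCircle_injective :
    ∀ n : ℕ, ∃ u : ZMod n →+ QCircle, Injective u
  | 0 => ⟨(AddMonoidHom.inl ℚ _).comp (Int.castAddHom ℚ),
      (Prod.mk_left_injective 0).comp Int.cast_injective⟩
  | n + 1 => by
    let f : ℤ →+ AddCircle (1 : ℚ) := (QuotientAddGroup.mk' _).comp
      ((AddMonoidHom.mulRight ((n + 1 : ℚ)⁻¹)).comp (Int.castAddHom ℚ))
    have hf : ∀ k : ℤ, f k = 0 ↔ ((n + 1 : ℕ) : ℤ) ∣ k := fun k => by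
      simp only [f, AddMonoidHom.comp_apply, QuotientAddGroup.mk'_apply, AddCircle.coe_eq_zero_iff,
        zsmul_one, Int.coe_castAddHom, AddMonoidHom.coe_mulRight]
      constructor
      · rintro ⟨m, hm⟩
        refine ⟨m, ?_⟩
        have : (k : ℚ) = (n + 1 : ℕ) * m := by rw [hm]; push_cast; field_simp
        exact_mod_cast this
      · rintro ⟨m, rfl⟩
        exact ⟨m, by push_cast; field_simp⟩
    refine ⟨(AddMonoidHom.inr ℚ _).comp (ZMod.lift (n + 1) ⟨f, (hf _).2 dvd_rfl⟩),
      (injective_iff_map_eq_zero _).2 fun x hx => ?_⟩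
    obtain ⟨k, rfl⟩ := ZMod.intCast_surjective x
    rw [AddMonoidHom.comp_apply, ZMod.lift_coe, AddMonoidHom.inr_apply] at hx
    exact (ZMod.intCast_zmod_eq_zero_iff_dvd k (n + 1)).2 ((hf k).1 (congrArg Prod.snd hx))

theorem exists_addMonoidHom_qCircle_injective_of_isAddCyclic (C : Type*) [AddGroup C]
    [IsAddCyclic C] : ∃ f : C →+ QCircle, Injective f :=
  have ⟨u, hu⟩ := ZMod.exists_addMonoidHom_qCircle_injective (Nat.card C)
  ⟨u.comp (zmodAddCyclicAddEquiv inferInstance).symm.toAddMonoidHom,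
    hu.comp (AddEquiv.injective _)⟩

noncomputable instance Finsupp.divisibleByInt {ι D : Type*} [AddCommGroup D] [DivisibleBy D ℤ] :
    DivisibleBy (ι →₀ D) ℤ :=
  divisibleByOfSMulRightSurj _ _ fun {n} hn v => by
    induction v using Finsupp.induction with
    | zero => exact ⟨0, smul_zero n⟩
    | single_add i d v _ _ ih =>
      obtain ⟨w, hw⟩ := ih
      exact ⟨Finsupp.single i (DivisibleBy.div d n) + w, by
        simp only [smul_add, Finsupp.smul_single, DivisibleBy.div_cancel d hn, hw]⟩

variable {A : Type*} [AddCommGroup A]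

theorem exists_addMonoidHom_qCircle_eq_zero_iff (B : AddSubgroup A) (a : A) :
    ∃ χ : A →+ QCircle, ∀ b ∈ B, ∀ k : ℤ, χ (b + k • a) = 0 ↔ k • a ∈ B := by
  let q : A ⧸ B := a
  obtain ⟨f, hf⟩ := exists_addMonoidHom_qCircle_injective_of_isAddCyclic (AddSubgroup.zmultiples q)
  obtain ⟨χ, hχ⟩ := (Module.Baer.of_divisible QCircle).extension_property_addMonoidHom
    (AddSubgroup.zmultiples q).subtype Subtype.val_injective f
  refine ⟨χ.comp (QuotientAddGroup.mk' B), fun b hb k => ?_⟩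
  have hq : ((b + k • a : A) : A ⧸ B) = k • q := by
    rw [QuotientAddGroup.mk_add, (QuotientAddGroup.eq_zero_iff b).2 hb, zero_add,
      QuotientAddGroup.mk_zsmul]
  have hχf : χ (k • q) = f ⟨k • q, AddSubgroup.zsmul_mem_zmultiples q k⟩ := by
    rw [← hχ]; rfl
  rw [AddMonoidHom.comp_apply, QuotientAddGroup.mk'_apply, hq, hχf,
    ← QuotientAddGroup.eq_zero_iff, QuotientAddGroup.mk_zsmul, map_eq_zero_iff f hf]
  exact Subtype.ext_iff

theorem exists_extension_support_subset {X Y ι D : Type*} [AddCommGroup X] [AddCommGroup Y]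
    [AddCommGroup D] [DivisibleBy D ℤ] (i : X →+ Y) (hi : Injective i) (f : X →+ (ι →₀ D))
    (s : Set ι) (hf : ∀ x, ↑(f x).support ⊆ s) :
    ∃ F : Y →+ (ι →₀ D), F.comp i = f ∧ ∀ y, ↑(F y).support ⊆ s := by
  classical
  obtain ⟨F, hF⟩ := (Module.Baer.of_divisible _).extension_property_addMonoidHom i hi f
  refine ⟨(Finsupp.filterAddHom (· ∈ s)).comp F, ?_, fun y x hx => ?_⟩
  · ext1 x
    change Finsupp.filter _ (F.comp i x) = f x
    rw [hF, Finsupp.filter_eq_self_iff]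
    exact fun j hj => hf x (Finsupp.mem_support_iff.2 hj)
  · change x ∈ (Finsupp.filter _ (F y)).support at hx
    rw [Finsupp.support_filter] at hx
    exact (Finset.mem_filter.1 hx).2

end Embedding

section PartialEmbedding

variable (A : Type*) [AddCommGroup A]

/-- Values supported on the domain leave every coordinate outside it free for an extension. -/
def supportedPartialEmbeddings : Set (A →ₗ.[ℤ] (A →₀ QCircle)) :=
  {f | (∀ x, f x = 0 → x = 0) ∧ ∀ x, ↑(f x).support ⊆ (f.domain : Set A)}

variable {A}

theorem bot_mem_supportedPartialEmbeddings : ⊥ ∈ supportedPartialEmbeddings A := by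
  have h0 : ∀ x : (⊥ : A →ₗ.[ℤ] (A →₀ QCircle)).domain, x = 0 := fun x =>
    Subtype.ext ((Submodule.mem_bot ℤ).1 x.2)
  exact ⟨fun x _ => h0 x, fun x => by simp [h0 x]⟩

theorem sSup_mem_supportedPartialEmbeddings {c : Set (A →ₗ.[ℤ] (A →₀ QCircle))}
    (hc : c ⊆ supportedPartialEmbeddings A) (hne : c.Nonempty) (hdir : DirectedOn (· ≤ ·) c) :
    LinearPMap.sSup c hdir ∈ supportedPartialEmbeddings A := by
  have hval : ∀ x : (LinearPMap.sSup c hdir).domain, ∃ l ∈ c, ∃ hx : (x : A) ∈ l.domain,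
      LinearPMap.sSup c hdir x = l ⟨x, hx⟩ := fun x => by
    obtain ⟨l, hl, hx⟩ := (LinearPMap.mem_domain_sSup_iff hne hdir).1 x.2
    exact ⟨l, hl, hx, LinearPMap.sSup_apply hdir hl ⟨x, hx⟩⟩
  refine ⟨fun x hx => ?_, fun x => ?_⟩
  · obtain ⟨l, hl, hxl, hlx⟩ := hval x
    have hx0 : (⟨x, hxl⟩ : l.domain) = 0 := (hc hl).1 _ (hlx ▸ hx)
    exact Submodule.coe_eq_zero.1 ((Submodule.mk_eq_zero _ _).1 hx0)
  · obtain ⟨l, hl, hxl, hlx⟩ := hval x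
    rw [hlx]
    exact ((hc hl).2 _).trans (LinearPMap.le_sSup hdir hl).1

theorem exists_le_mem_domain_of_mem_supportedPartialEmbeddings
    {f : A →ₗ.[ℤ] (A →₀ QCircle)} (hf : f ∈ supportedPartialEmbeddings A) {a : A}
    (ha : a ∉ f.domain) : ∃ g ∈ supportedPartialEmbeddings A, f ≤ g ∧ a ∈ g.domain := by
  classical
  obtain ⟨F, hF, hFsupp⟩ := exists_extension_support_subset f.domain.subtype.toAddMonoidHom
    Subtype.val_injective f.toFun.toAddMonoidHom _ hf.2
  obtain ⟨χ, hχ⟩ := exists_addMonoidHom_qCircle_eq_zero_iff f.domain.toAddSubgroup a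
  -- the new coordinate `a` records the class of `x` modulo the old domain
  let g : A →+ (A →₀ QCircle) := F + (Finsupp.singleAddHom a).comp χ
  have hFa : ∀ x, F x a = 0 := fun x =>
    Finsupp.notMem_support_iff.1 fun h => ha (hFsupp x h)
  have hχdom : ∀ x ∈ f.domain, χ x = 0 := fun x hx => by
    simpa using (hχ x hx 0).2 (by simp)
  have hgf : ∀ x : f.domain, g x = f x := fun x => by
    simpa [g, hχdom x x.2] using DFunLike.congr_fun hF x
  have hχmem : ∀ x ∈ f.domain ⊔ Submodule.span ℤ {a}, χ x = 0 → x ∈ f.domain := by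
    intro x hx hχx
    obtain ⟨b, hb, _, hc, rfl⟩ := Submodule.mem_sup.1 hx
    obtain ⟨k, rfl⟩ := Submodule.mem_span_singleton.1 hc
    exact add_mem hb ((hχ b hb k).1 hχx)
  refine ⟨g.toIntLinearMap.toPMap (f.domain ⊔ Submodule.span ℤ {a}), ⟨fun x hx => ?_, fun x => ?_⟩,
    ⟨le_sup_left, fun x y hxy => ?_⟩, Submodule.mem_sup_right (Submodule.mem_span_singleton_self a)⟩
  · have hgx : g x = 0 := hx
    have hxdom := hχmem x x.2 (by simpa [g, hFa] using DFunLike.congr_fun hgx a)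
    rw [← Subtype.coe_mk (x : A) hxdom, hgf] at hgx
    exact Submodule.coe_eq_zero.1 ((Submodule.mk_eq_zero _ _).1 (hf.1 _ hgx))
  · intro i hi
    change i ∈ (F x + Finsupp.single a (χ x)).support at hi
    rcases Finset.mem_union.1 (Finsupp.support_add hi) with hiF | hia
    · exact Submodule.mem_sup_left (hFsupp x hiF)
    · rw [Finset.mem_singleton.1 (Finsupp.support_single_subset hia)]
      exact Submodule.mem_sup_right (Submodule.mem_span_singleton_self a)
  · change f x = g y
    rw [← hxy, hgf]

variable (A) in
theorem exists_injective_addMonoidHom_finsupp_qCircle :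
    ∃ φ : A →+ (A →₀ QCircle), Injective φ := by
  obtain ⟨m, -, hm⟩ := zorn_le_nonempty₀ (supportedPartialEmbeddings A)
    (fun c hc hchain f hf => ⟨_, sSup_mem_supportedPartialEmbeddings hc ⟨f, hf⟩ hchain.directedOn,
      fun _ => LinearPMap.le_sSup _⟩) ⊥ bot_mem_supportedPartialEmbeddings
  have hdom : ∀ a, a ∈ m.domain := fun a => by
    by_contra ha
    obtain ⟨g, hg, hmg, hag⟩ := exists_le_mem_domain_of_mem_supportedPartialEmbeddings hm.prop ha
    exact ha ((hm.2 hg hmg).1 hag)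
  refine ⟨AddMonoidHom.mk' (fun x => m ⟨x, hdom x⟩) fun x y => map_add m.toFun ⟨x, _⟩ ⟨y, _⟩,
    (injective_iff_map_eq_zero _).2 fun x hx => congrArg Subtype.val (hm.prop.1 _ hx)⟩

end PartialEmbedding

universe u

/-- `WithZero G` need not be cancellative, but `G` still embeds into its Grothendieck group:
equality there is witnessed by adding `0` or an element of `G`, and both cancel. -/
theorem exists_injective_addHom_finsupp_qCircle {G : Type u} [AddCommSemigroup G]
    (hcancel : ∀ a b c : G, a + c = b + c → a = b) :
    ∃ (ι : Type u) (ψ : G →ₙ+ (ι →₀ QCircle)), Injective ψ := by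
  let j : G →ₙ+ Algebra.GrothendieckAddGroup (WithZero G) :=
    (Algebra.GrothendieckAddGroup.of : WithZero G →+ _).toAddHom.comp WithZero.coeAddHom
  have hj : Injective j := fun a b h => by
    obtain ⟨⟨c, _⟩, hc⟩ := (AddLocalization.addMonoidOf ⊤).eq_iff_exists.1 h
    rcases eq_or_ne c 0 with rfl | hc0
    · simpa using hc
    · obtain ⟨c, rfl⟩ := WithZero.ne_zero_iff_exists.1 hc0
      have hc : c + a = c + b := WithZero.coe_injective (by simpa using hc)
      exact hcancel a b c (by rwa [add_comm a, add_comm b])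
  obtain ⟨φ, hφ⟩ :=
    exists_injective_addMonoidHom_finsupp_qCircle (Algebra.GrothendieckAddGroup (WithZero G))
  exact ⟨_, φ.toAddHom.comp j, hφ.comp hj⟩

theorem stmt0_general {G : Type*} [AddCommSemigroup G]
    (hcancel : ∀ a b c : G, a + c = b + c → a = b) :
    ∃ c : G → ℕ, ∀ X : Set G, ℵ₀ < Cardinal.mk X →
      ∀ k : ℕ, ∃ g ∈ FS X, c g = k := by
  obtain ⟨ι, ψ, hψ⟩ := exists_injective_addHom_finsupp_qCircle hcancel
  refine ⟨fun g => colour (ψ g), fun X hX k => ?_⟩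
  have hψX : ¬ (ψ '' X).Countable := fun h => hX.not_ge <|
    Cardinal.le_aleph0_iff_set_countable.2 (Set.countable_of_injective_of_countable_image hψ.injOn h)
  obtain ⟨_, hψg, hgk⟩ := exists_mem_FS_colour_eq hψX k
  obtain ⟨g, hg, rfl⟩ := FS_image_subset ψ X hψg
  exact ⟨g, hg, hgk⟩

theorem stmt0 {G : Type*} [AddCommSemigroup G]
    (hcancel : ∀ a b c : G, a + c = b + c → a = b)
    (hG : ℵ₀ < Cardinal.mk G) :
    ∃ c : G → ℕ, ∀ X : Set G, ℵ₀ < Cardinal.mk X →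
      ∀ k : ℕ, ∃ g ∈ FS X, c g = k :=
  stmt0_general hcancel
end

section
/- There exists a function f : ℕ → [ℕ]^{<ω} (from the natural numbers to the finite subsets of ℕ) such that: (i) f(k) ⊆ {0, 1, …, k−1} for every k ∈ ℕ; and (ii) for every m ∈ ℕ, every positive integer n, and every finite set Ω ⊆ ℕ, the set {k ∈ ℕ : f(m + n·k) = Ω} is infinite. In particular, such an f is surjective onto the finite subsets of ℕ. -/
open Classical

noncomputable section StmtAux

def triAux (t : ℕ) : ℕ × ℕ × Finset ℕ :=
  (Denumerable.ofNat (ℕ × ℕ × ℕ × Finset ℕ) t).2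

def kfAux : ℕ → ℕ → ℕ := fun b t => b + (triAux t).2.2.sup id + (triAux t).1 + 1

def posAux : ℕ → ℕ
  | 0 => (triAux 0).1 + ((triAux 0).2.1 + 1) * kfAux 0 0
  | t + 1 => (triAux (t+1)).1 + ((triAux (t+1)).2.1 + 1) * kfAux (posAux t + 1) (t+1)

def kAux : ℕ → ℕ
  | 0 => kfAux 0 0
  | t + 1 => kfAux (posAux t + 1) (t+1)

lemma posAux_eq (t : ℕ) : posAux t = (triAux t).1 + ((triAux t).2.1 + 1) * kAux t := by
  cases t <;> rfl

lemma kAux_le (t : ℕ) : kAux t ≤ posAux t := by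
  rw [posAux_eq]
  calc kAux t ≤ ((triAux t).2.1 + 1) * kAux t := Nat.le_mul_of_pos_left _ (Nat.succ_pos _)
    _ ≤ _ := Nat.le_add_left _ _

lemma sup_lt_kAux (t : ℕ) : (triAux t).2.2.sup id < kAux t := by
  cases t <;> · show _ < _ + _ + _ + 1; omega

lemma posAux_strictMono : StrictMono posAux := by
  apply strictMono_nat_of_lt_succ
  intro t
  calc posAux t < posAux t + 1 + (triAux (t+1)).2.2.sup id + (triAux (t+1)).1 + 1 := by omega
    _ = kAux (t+1) := rfl
    _ ≤ posAux (t+1) := kAux_le _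

def FAux (x : ℕ) : Finset ℕ :=
  if h : ∃ t, posAux t = x then (triAux h.choose).2.2 else ∅

lemma FAux_posAux (t : ℕ) : FAux (posAux t) = (triAux t).2.2 := by
  have h : ∃ s, posAux s = posAux t := ⟨t, rfl⟩
  rw [FAux, dif_pos h, posAux_strictMono.injective h.choose_spec]

end StmtAux

theorem stmt_1 :
    ∃ f : ℕ → Finset ℕ,
      (∀ k : ℕ, ∀ j ∈ f k, j < k) ∧
      (∀ m n : ℕ, 0 < n → ∀ Ω : Finset ℕ, {k : ℕ | f (m + n * k) = Ω}.Infinite) ∧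
      Function.Surjective f := by
  have hinf : ∀ m n : ℕ, 0 < n → ∀ Ω : Finset ℕ,
      {k : ℕ | FAux (m + n * k) = Ω}.Infinite := by
    intro m n hn Ω
    set e : ℕ → ℕ := fun a =>
      @Encodable.encode (ℕ × ℕ × ℕ × Finset ℕ) Denumerable.toEncodable (a, m, n - 1, Ω)
    have htri : ∀ a, triAux (e a) = (m, n - 1, Ω) := by
      intro a
      have h : Denumerable.ofNat (ℕ × ℕ × ℕ × Finset ℕ) (e a) = (a, m, n - 1, Ω) :=
        Denumerable.ofNat_encode _
      simp only [triAux, h]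
    have hpos : ∀ a, posAux (e a) = m + n * kAux (e a) := by
      intro a
      rw [posAux_eq, htri a]
      simp only
      congr 2
      omega
    apply Set.infinite_of_injective_forall_mem (f := fun a => kAux (e a))
    · intro a b hab
      have h1 : posAux (e a) = posAux (e b) := by
        simp only at hab; rw [hpos, hpos, hab]
      have h2 := posAux_strictMono.injective h1
      have h3 := @Encodable.encode_injective (ℕ × ℕ × ℕ × Finset ℕ)
        Denumerable.toEncodable _ _ h2
      exact (Prod.mk.injEq _ _ _ _ ▸ h3).1
    · intro a
      show FAux (m + n * kAux (e a)) = Ω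
      rw [← hpos a, FAux_posAux, htri a]
  refine ⟨FAux, ?_, hinf, ?_⟩
  · intro x j hj
    rw [FAux] at hj
    split_ifs at hj with h
    · have h1 : j ≤ (triAux h.choose).2.2.sup id := Finset.le_sup (f := id) hj
      have h2 := sup_lt_kAux h.choose
      have h3 := kAux_le h.choose
      have h4 := h.choose_spec
      omega
    · simp at hj
  · intro Ω
    obtain ⟨k, hk⟩ := (hinf 0 1 one_pos Ω).nonempty
    exact ⟨0 + 1 * k, hk⟩
end

section
/- Let λ be an infinite cardinal with λ > cf(λ), write κ := cf(λ), and let θ ≤ κ be a cardinal. If Pℓ(κ,θ) holds, then Pℓ(λ,θ) holds. -/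
/-!
Fix a cofinal sequence `B : cf λ → λ` and send each `α < λ` to an index `p α` with `α ≤ B (p α)`.
Colour a finite `x ⊆ λ` by the `Pℓ(cf λ, θ)`-colour of `p '' x`. Taking images under `p` preserves
the condition `x △ y ⊆ z ⊆ x ∪ y`, so it suffices that a family `𝒳` of size `λ` has an image of size
`cf λ`. The fibre of `p ''` over a finite `u` consists of finite subsets of `sup B[u] + 1 < λ`, so
it has size `< λ`, and `λ` is not a union of fewer than `cf λ` sets of size `< λ`.
-/

open Cardinal

/-- `[κ]^{<χ}`: the collection of sets of ordinals below `κ` of cardinality `< χ`. -/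
def OSet (κ χ : Cardinal.{0}) : Type 1 :=
  {x : Set Ordinal.{0} // x ⊆ Set.Iio κ.ord ∧ Cardinal.mk x < Cardinal.lift.{1} χ}

/-- The principle `Pℓ(κ,θ)`. -/
def Pl (κ θ : Cardinal.{0}) : Prop :=
  ∃ d : OSet κ ℵ₀ → θ.ord.ToType,
    ∀ 𝒳 : Set (OSet κ ℵ₀), Cardinal.mk 𝒳 = Cardinal.lift.{1} κ →
      ∀ δ : θ.ord.ToType,
        ∃ x ∈ 𝒳, ∃ y ∈ 𝒳, x ≠ y ∧
          ∀ z : OSet κ ℵ₀, symmDiff x.1 y.1 ⊆ z.1 → z.1 ⊆ x.1 ∪ y.1 → d z = δ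

open Set

universe u

theorem Set.symmDiff_image_subset {α β : Type*} (f : α → β) (s t : Set α) :
    symmDiff (f '' s) (f '' t) ⊆ f '' symmDiff s t := by
  rintro _ (⟨⟨a, ha, rfl⟩, hn⟩ | ⟨⟨a, ha, rfl⟩, hn⟩)
  · exact mem_image_of_mem f (Or.inl ⟨ha, fun h ↦ hn (mem_image_of_mem f h)⟩)
  · exact mem_image_of_mem f (Or.inr ⟨ha, fun h ↦ hn (mem_image_of_mem f h)⟩)

theorem Cardinal.mk_finset_lt {α : Type*} {c : Cardinal} (hc : ℵ₀ ≤ c) (h : #α < c) :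
    #(Finset α) < c := by
  cases finite_or_infinite α
  · exact (lt_aleph0_of_finite _).trans_le hc
  · rwa [mk_finset_of_infinite]

theorem Cardinal.cof_ord_le_mk_image {α β : Type u} (g : α → β) {θ : Cardinal} (hθ : ℵ₀ ≤ θ)
    (hg : ∀ b, #(g ⁻¹' {b}) < θ) {s : Set α} (hs : θ ≤ #s) : θ.ord.cof ≤ #(g '' s) := by
  by_contra! h
  obtain ⟨b, hb⟩ := infinite_pigeonhole_card (s.imageFactorization g) θ hs hθ h
  have hfib : #(s.imageFactorization g ⁻¹' {b}) ≤ #(g ⁻¹' {b.1}) := by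
    rw [← mk_image_eq Subtype.val_injective]
    refine mk_le_mk_of_subset ?_
    rintro _ ⟨a, ha, rfl⟩
    exact congrArg Subtype.val ha
  exact (hb.trans hfib).not_gt (hg b)

theorem Ordinal.exists_cofinal_reindex (o : Ordinal) :
    ∃ p B : Ordinal → Ordinal, MapsTo p (Iio o) (Iio o.cof.ord) ∧
      MapsTo B (Iio o.cof.ord) (Iio o) ∧ ∀ α < o, α ≤ B (p α) := by
  obtain ⟨f, hf⟩ := exists_isFundamentalSeq (o := o) rfl
  have hcof : ∀ a, ∃ i, a ≤ f i := fun a ↦ by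
    obtain ⟨_, ⟨i, rfl⟩, hi⟩ := hf.isCofinal_range a
    exact ⟨i, hi⟩
  choose g hg using hcof
  classical
  refine ⟨fun α ↦ if h : α ∈ Iio o then g ⟨α, h⟩ else 0,
    fun ζ ↦ if h : ζ ∈ Iio o.cof.ord then f ⟨ζ, h⟩ else 0,
    fun α hα ↦ ?_, fun ζ hζ ↦ ?_, fun α hα ↦ ?_⟩
  · dsimp only
    rw [dif_pos hα]
    exact (g _).2
  · dsimp only
    rw [dif_pos hζ]
    exact (f _).2
  · dsimp only
    rw [dif_pos (mem_Iio.mpr hα), dif_pos (g _).2]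
    exact hg ⟨α, hα⟩

theorem mk_lt_lift_aleph0_iff (s : Set Ordinal.{0}) :
    #s < lift.{1} (ℵ₀ : Cardinal.{0}) ↔ s.Finite := by
  rw [lift_aleph0, mk_lt_aleph0_iff, finite_coe_iff]

namespace OSet

variable {κ μ : Cardinal.{0}}

theorem finite (x : OSet κ ℵ₀) : x.1.Finite :=
  (mk_lt_lift_aleph0_iff _).1 x.2.2

def map (p : Ordinal.{0} → Ordinal.{0}) (hp : MapsTo p (Iio κ.ord) (Iio μ.ord))
    (x : OSet κ ℵ₀) : OSet μ ℵ₀ :=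
  ⟨p '' x.1, (hp.mono_left x.2.1).image_subset, (mk_lt_lift_aleph0_iff _).2 (x.finite.image p)⟩

theorem mk_setOf_subset_le (S : Set Ordinal.{0}) :
    #{x : OSet κ ℵ₀ | x.1 ⊆ S} ≤ #(Finset S) := by
  classical
  refine mk_le_of_injective (f := fun x ↦ x.1.finite.toFinset.subtype (· ∈ S)) fun x y hxy ↦ ?_
  have hmap : ∀ z : {x : OSet κ ℵ₀ | x.1 ⊆ S},
      (z.1.finite.toFinset.subtype (· ∈ S)).map (Function.Embedding.subtype _) =
        z.1.finite.toFinset :=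
    fun z ↦ Finset.subtype_map_of_mem fun _ ha ↦ z.2 (z.1.finite.mem_toFinset.1 ha)
  have := congrArg (Finset.map (Function.Embedding.subtype _)) hxy
  rw [hmap, hmap, Finite.toFinset_inj] at this
  exact Subtype.ext (Subtype.ext this)

theorem mk_le (hκ : ℵ₀ ≤ κ) : #(OSet κ ℵ₀) ≤ lift.{1} κ := by
  have : Infinite (Iio κ.ord) := by
    rwa [infinite_iff, mk_Iio_ordinal, card_ord, aleph0_le_lift]
  calc #(OSet κ ℵ₀) = #(univ : Set (OSet κ ℵ₀)) := mk_univ.symm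
    _ ≤ #{x : OSet κ ℵ₀ | x.1 ⊆ Iio κ.ord} := mk_le_mk_of_subset fun x _ ↦ x.2.1
    _ ≤ #(Finset (Iio κ.ord)) := mk_setOf_subset_le _
    _ = lift.{1} κ := by rw [mk_finset_of_infinite, mk_Iio_ordinal, card_ord]

theorem mk_map_preimage_singleton_lt {p B : Ordinal.{0} → Ordinal.{0}} (hμ : ℵ₀ ≤ μ)
    (hp : MapsTo p (Iio μ.ord) (Iio κ.ord)) (hB : MapsTo B (Iio κ.ord) (Iio μ.ord))
    (hpB : ∀ α < μ.ord, α ≤ B (p α)) (u : OSet κ ℵ₀) :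
    #(map p hp ⁻¹' {u}) < lift.{1} μ := by
  set β := u.finite.toFinset.sup B
  have hβ : β < μ.ord := by
    refine (Finset.sup_lt_iff (ord_pos.2 ?_)).2 fun ζ hζ ↦ hB (u.2.1 (u.finite.mem_toFinset.1 hζ))
    exact aleph0_pos.trans_le hμ
  have hfiber : map p hp ⁻¹' {u} ⊆ {x | x.1 ⊆ Iic β} := by
    rintro x rfl α hα
    exact (hpB α (x.2.1 hα)).trans (Finset.le_sup (f := B)
      ((map p hp x).finite.mem_toFinset.2 (mem_image_of_mem p hα)))
  calc #(map p hp ⁻¹' {u}) ≤ #{x : OSet μ ℵ₀ | x.1 ⊆ Iic β} := mk_le_mk_of_subset hfiber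
    _ ≤ #(Finset (Iic β)) := mk_setOf_subset_le _
    _ < lift.{1} μ := by
      refine mk_finset_lt (aleph0_le_lift.2 hμ) ?_
      rw [← Order.Iio_succ, mk_Iio_ordinal, lift_lt, ← lt_ord]
      exact (isSuccLimit_ord hμ).succ_lt hβ

end OSet

theorem Pl.of_map {κ μ θ : Cardinal.{0}} (p : Ordinal.{0} → Ordinal.{0})
    (hp : MapsTo p (Iio μ.ord) (Iio κ.ord))
    (hmap : ∀ 𝒳 : Set (OSet μ ℵ₀), #𝒳 = lift.{1} μ → #(OSet.map p hp '' 𝒳) = lift.{1} κ)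
    (h : Pl κ θ) : Pl μ θ := by
  obtain ⟨d, hd⟩ := h
  refine ⟨d ∘ OSet.map p hp, fun 𝒳 h𝒳 δ ↦ ?_⟩
  obtain ⟨_, ⟨x, hx, rfl⟩, _, ⟨y, hy, rfl⟩, hne, hcol⟩ := hd _ (hmap 𝒳 h𝒳) δ
  refine ⟨x, hx, y, hy, fun h ↦ hne (h ▸ rfl), fun z hz₁ hz₂ ↦ hcol _ ?_ ?_⟩
  · exact (symmDiff_image_subset p _ _).trans (image_mono hz₁)
  · exact (image_mono hz₂).trans (image_union p _ _).subset

theorem stmt_4_general (lam θ : Cardinal.{0}) (hinf : ℵ₀ ≤ lam)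
    (h : Pl lam.ord.cof θ) : Pl lam θ := by
  obtain ⟨p, B, hp, hB, hpB⟩ := Ordinal.exists_cofinal_reindex lam.ord
  have hcof : ℵ₀ ≤ lam.ord.cof :=
    Ordinal.aleph0_le_cof_iff.2 (Ordinal.one_lt_cof_iff.2 (isSuccLimit_ord hinf))
  refine Pl.of_map p hp (fun 𝒳 h𝒳 ↦ le_antisymm ?_ ?_) h
  · exact (mk_le_mk_of_subset (subset_univ _)).trans (mk_univ.trans_le (OSet.mk_le hcof))
  · have := cof_ord_le_mk_image (OSet.map p hp) (aleph0_le_lift.2 hinf)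
      (OSet.mk_map_preimage_singleton_lt hinf hp hB hpB) h𝒳.ge
    rwa [← lift_ord, ← Ordinal.lift_cof] at this

theorem stmt_4 (lam θ : Cardinal.{0}) (hinf : ℵ₀ ≤ lam)
    (hsing : lam.ord.cof < lam) (hθ : θ ≤ lam.ord.cof)
    (h : Pl lam.ord.cof θ) : Pl lam θ :=
  stmt_4_general lam θ hinf h
end

section
/- Let G be a commutative cancellative semigroup of uncountable cardinality κ, let θ ≤ κ be a cardinal, let c : G → θ be a colouring, and let δ < θ. Then the following are equivalent: (1) for all X, Y ⊆ G with |X| = |Y| = κ, there exist x ∈ X and y ∈ Y with c(x + y) = δ; (2) for every integer n ≥ 2 and all X₁, …, Xₙ ⊆ G each of cardinality κ, there exist x₁ ∈ X₁, …, xₙ ∈ Xₙ with c(x₁ + ⋯ + xₙ) = δ. -/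
/-!
Condition (2) for `n + 1` sets follows from condition (2) for `n` sets: given a large `X₀`, a
large `X₁` and any `b ∈ X₁`, the translate `X₀ + b` is again large because translation is
injective in a cancellative semigroup, and a witness `a + b ∈ X₀ + b` for the `n`-fold condition
splits into witnesses `a ∈ X₀`, `b ∈ X₁`. The case of two sets is condition (1) itself.
-/

open Cardinal

section

variable {G : Type*} [AddCommSemigroup G]

theorem sgSum_succ_eq_sgSum_cons (n : ℕ) (x : Fin (n + 2) → G) :
    sgSum (n + 1) x = sgSum n (Fin.cons (x 0 + x 1) (Fin.tail (Fin.tail x))) := by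
  induction n with
  | zero => rfl
  | succ n ih =>
    change sgSum (n + 1) (fun i => x i.castSucc) + x (Fin.last (n + 2)) = _
    rw [ih]
    change _ = sgSum n (fun i => Fin.cons (x 0 + x 1) (Fin.tail (Fin.tail x)) i.castSucc)
      + x (Fin.last (n + 2))
    congr 2
    funext i
    cases i using Fin.cases <;> rfl

variable [IsRightCancelAdd G]

theorem mk_image_add_right (X : Set G) (b : G) : #((· + b) '' X) = #X :=
  mk_image_eq (add_left_injective b)

theorem exists_sgSum_of_forall_exists_add {P : G → Prop}
    (hP : ∀ X Y : Set G, #X = #G → #Y = #G → ∃ x ∈ X, ∃ y ∈ Y, P (x + y)) (n : ℕ)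
    (X : Fin (n + 2) → Set G) (hX : ∀ i, #(X i) = #G) :
    ∃ x : Fin (n + 2) → G, (∀ i, x i ∈ X i) ∧ P (sgSum (n + 1) x) := by
  induction n with
  | zero =>
    obtain ⟨x, hx, y, hy, hxy⟩ := hP (X 0) (X 1) (hX 0) (hX 1)
    refine ⟨![x, y], fun i => ?_, hxy⟩
    fin_cases i <;> assumption
  | succ n ih =>
    have : Nonempty G := by
      obtain ⟨g, -⟩ := hP Set.univ Set.univ mk_univ mk_univ
      exact ⟨g⟩
    obtain ⟨b, hb⟩ : (X 1).Nonempty :=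
      Set.nonempty_coe_sort.mp (mk_ne_zero_iff.mp ((hX 1).trans_ne (mk_ne_zero_iff.mpr this)))
    let X' : Fin (n + 2) → Set G := Fin.cons ((· + b) '' X 0) (fun i => X i.succ.succ)
    have hX' : ∀ i, #(X' i) = #G := Fin.cases ((mk_image_add_right _ b).trans (hX 0))
      (fun i => hX i.succ.succ)
    obtain ⟨x', hx', hPx'⟩ := ih X' hX'
    obtain ⟨a, ha, hab⟩ := hx' 0
    refine ⟨Fin.cons a (Fin.cons b (Fin.tail x')), Fin.cases ha (Fin.cases hb ?_), ?_⟩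
    · have hx'_eq : Fin.cons (a + b) (Fin.tail x') = x' := by
        rw [show a + b = x' 0 from hab, Fin.cons_self_tail]
      rw [sgSum_succ_eq_sgSum_cons]
      change P (sgSum (n + 1) (Fin.cons (a + b) (Fin.tail x')))
      rwa [hx'_eq]
    · intro i
      exact hx' i.succ

end

theorem stmt_11_general {G : Type} [AddCommSemigroup G]
    (hcancel : ∀ a b c : G, a + c = b + c → a = b)
    (θ : Cardinal.{0})
    (c : G → θ.ord.ToType) (δ : θ.ord.ToType) :
    -- (1) sums of two elements, one from each of two κ-sized sets
    ((∀ X Y : Set G, Cardinal.mk X = Cardinal.mk G → Cardinal.mk Y = Cardinal.mk G →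
        ∃ x ∈ X, ∃ y ∈ Y, c (x + y) = δ) ↔
      -- (2) for every n ≥ 2 (here `n+2`), sums of `n+2` elements, one from each set
      (∀ (n : ℕ) (X : Fin (n + 2) → Set G),
        (∀ i, Cardinal.mk (X i) = Cardinal.mk G) →
        ∃ x : Fin (n + 2) → G, (∀ i, x i ∈ X i) ∧ c (sgSum (n + 1) x) = δ)) := by
  have : IsRightCancelAdd G := ⟨fun b a a' h => hcancel a a' b h⟩
  refine ⟨exists_sgSum_of_forall_exists_add (P := (c · = δ)), fun h X Y hX hY => ?_⟩
  obtain ⟨x, hx, hxδ⟩ := h 0 ![X, Y] (Fin.forall_fin_two.mpr ⟨hX, hY⟩)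
  exact ⟨x 0, hx 0, x 1, hx 1, hxδ⟩

theorem stmt_11 {G : Type} [AddCommSemigroup G]
    (hcancel : ∀ a b c : G, a + c = b + c → a = b)
    (hG : ℵ₀ < Cardinal.mk G) (θ : Cardinal.{0}) (hθ : θ ≤ Cardinal.mk G)
    (c : G → θ.ord.ToType) (δ : θ.ord.ToType) :
    -- (1) sums of two elements, one from each of two κ-sized sets
    ((∀ X Y : Set G, Cardinal.mk X = Cardinal.mk G → Cardinal.mk Y = Cardinal.mk G →
        ∃ x ∈ X, ∃ y ∈ Y, c (x + y) = δ) ↔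
      -- (2) for every n ≥ 2 (here `n+2`), sums of `n+2` elements, one from each set
      (∀ (n : ℕ) (X : Fin (n + 2) → Set G),
        (∀ i, Cardinal.mk (X i) = Cardinal.mk G) →
        ∃ x : Fin (n + 2) → G, (∀ i, x i ∈ X i) ∧ c (sgSum (n + 1) x) = δ)) :=
  stmt_11_general hcancel θ c δ
end

section
/- Let G be a commutative cancellative semigroup of cardinality κ, and let θ ≤ κ be a cardinal. If Pℓ(κ,θ) holds, then G ↛ [κ]^{FS₂}_θ holds; that is, there exists a colouring c : G → θ such that for every X ⊆ G of cardinality κ and every δ < θ, there are two distinct elements x, y ∈ X with c(x + y) = δ. -/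
open Cardinal

/-!
Through its Grothendieck group `H`, `G` embeds into a direct sum `H →₀ ℚ × ℚ/ℤ` of countable groups;
the embedding is built by Zorn's lemma, a new element `h` receiving the fresh coordinate `h`.
The supports `u x` of the images satisfy `u x ∆ u y ⊆ u (x + y) ⊆ u x ∪ u y`, and only countably
many `x` share a support, so for uncountable `κ` every `X` of size `κ` has `κ` supports and `d ∘ u`
works for a `Pℓ(κ, θ)`-colouring `d`.

For `κ ≤ ℵ₀`, on a chain `x₀ ⊂ x₁ ⊂ ⋯` the principle forces `d xⱼ = δ` at non-minimal members;
this makes `Pℓ(κ, κ)` false for finite `κ` and `Pℓ(ℵ₀, θ)` false for `θ > 1`. In the remaining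
cases, `θ < κ < ℵ₀` (where `X = G` and the sums `g₀ + y` are pairwise distinct) and `θ = 1`, the
colouring is built directly.
-/

open Function

universe u

section Colorings

variable {I C : Type*}

/-- `d` witnesses `Pℓ(κ, C)` on `[I]^{<ω}`. -/
def IsPlColoring [DecidableEq I] (κ : Cardinal) (d : Finset I → C) : Prop :=
  ∀ 𝒳 : Set (Finset I), #𝒳 = κ → ∀ δ : C, ∃ x ∈ 𝒳, ∃ y ∈ 𝒳, x ≠ y ∧
    ∀ z, symmDiff x y ⊆ z → z ⊆ x ∪ y → d z = δ

/-- `c` witnesses `G ↛ [|G|]^{FS₂}_C`. -/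
def IsFS2Coloring {G : Type*} [Add G] (c : G → C) : Prop :=
  ∀ X : Set G, #X = #G → ∀ δ : C, ∃ x ∈ X, ∃ y ∈ X, x ≠ y ∧ c (x + y) = δ

theorem isFS2Coloring_of_subsingleton {G : Type*} [Add G] [Subsingleton C] (c : G → C)
    (hG : 1 < #G) : IsFS2Coloring c := by
  intro X hX δ
  have : Nontrivial X := one_lt_iff_nontrivial.1 (hX ▸ hG)
  obtain ⟨⟨x, hx⟩, ⟨y, hy⟩, hxy⟩ := exists_pair_ne X
  exact ⟨x, hx, y, hy, fun h => hxy (Subtype.ext h), Subsingleton.elim _ _⟩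

end Colorings

theorem Pl.nonempty {κ θ : Cardinal.{0}} (h : Pl κ θ) : Nonempty θ.ord.ToType :=
  let ⟨d, _⟩ := h
  ⟨d ⟨∅, Set.empty_subset _, by simp [aleph0_pos]⟩⟩

theorem Pl.exists_isPlColoring {κ θ : Cardinal.{0}} (h : Pl κ θ) {I : Type} [DecidableEq I]
    (hI : #I ≤ κ) : ∃ d : Finset I → θ.ord.ToType, IsPlColoring κ d := by
  obtain ⟨d, hd⟩ := h
  obtain ⟨e⟩ : Nonempty (I ↪ κ.ord.ToType) := (le_def _ _).1 (by rwa [mk_ord_toType])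
  set f : I → Ordinal.{0} := fun i => (Ordinal.ToType.mk.symm (e i) : Set.Iio κ.ord)
  have hf : Injective f := fun i j hij =>
    e.injective (Ordinal.ToType.mk.symm.injective (Subtype.ext hij))
  let F : Finset I → OSet κ ℵ₀ := fun s =>
    ⟨f '' s, by rintro _ ⟨i, -, rfl⟩; exact (Ordinal.ToType.mk.symm (e i)).2, by simp⟩
  have hF : Injective F := fun s t hst =>
    Finset.coe_injective (hf.image_injective (congrArg Subtype.val hst))
  refine ⟨d ∘ F, fun 𝒳 h𝒳 δ => ?_⟩
  have hF𝒳 : #(F '' 𝒳) = lift.{1} κ := by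
    simpa [h𝒳] using mk_image_eq_lift F 𝒳 hF
  obtain ⟨_, ⟨x, hx, rfl⟩, _, ⟨y, hy, rfl⟩, hxy, hd'⟩ := hd (F '' 𝒳) hF𝒳 δ
  refine ⟨x, hx, y, hy, ne_of_apply_ne F hxy, fun z hz₁ hz₂ => hd' (F z) ?_ ?_⟩
  · change symmDiff (f '' x) (f '' y) ⊆ f '' z
    rw [← Set.image_symmDiff hf, ← Finset.coe_symmDiff]
    exact Set.image_mono (Finset.coe_subset.2 hz₁)
  · change f '' z ⊆ f '' x ∪ f '' y
    rw [← Set.image_union, ← Finset.coe_union]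
    exact Set.image_mono (Finset.coe_subset.2 hz₂)

theorem strictMono_iterate_of_forall_lt {α : Type*} [Preorder α] {F : α → α}
    (hF : ∀ a, a < F a) (a : α) : StrictMono fun n => F^[n] a :=
  strictMono_nat_of_lt_succ fun n => by rw [iterate_succ_apply']; exact hF _

namespace IsPlColoring

variable {I C : Type} [DecidableEq I] {κ : Cardinal.{0}} {d : Finset I → C}

theorem exists_lt_apply_eq (hd : IsPlColoring κ d) {ι : Type} [LinearOrder ι] {s : ι → Finset I}
    (hs : StrictMono s) (hι : #ι = κ) (δ : C) : ∃ i j, i < j ∧ d (s j) = δ := by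
  obtain ⟨_, ⟨i, rfl⟩, _, ⟨j, rfl⟩, hij, hd'⟩ :=
    hd (Set.range s) ((mk_range_eq s hs.injective).trans hι) δ
  -- for `x ⊂ y` in the chain, `z = y` lies between `x ∆ y` and `x ∪ y`
  rcases lt_or_gt_of_ne (ne_of_apply_ne s hij) with h | h
  · refine ⟨i, j, h, hd' _ ?_ Finset.subset_union_right⟩
    exact symmDiff_of_le (hs h).le ▸ Finset.sdiff_subset
  · refine ⟨j, i, h, hd' _ ?_ Finset.subset_union_left⟩
    exact symmDiff_of_ge (hs h).le ▸ Finset.sdiff_subset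

theorem exists_iterate_succ_eq (hd : IsPlColoring ℵ₀ d) {F : Finset I → Finset I}
    (hF : ∀ s, s ⊂ F s) (s : Finset I) (δ : C) : ∃ n, d (F^[n + 1] s) = δ := by
  obtain ⟨i, j, hij, hj⟩ :=
    hd.exists_lt_apply_eq (strictMono_iterate_of_forall_lt hF s) mk_nat δ
  obtain ⟨n, rfl⟩ := Nat.exists_eq_add_of_lt hij
  exact ⟨i + n, hj⟩

end IsPlColoring

theorem not_Pl_aleph0 {θ : Cardinal.{0}} (hθ : 1 < θ) : ¬ Pl ℵ₀ θ := by
  intro h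
  obtain ⟨d, hd⟩ := h.exists_isPlColoring (I := ℕ) mk_nat.le
  have : Nontrivial θ.ord.ToType := one_lt_iff_nontrivial.1 (by rwa [mk_ord_toType])
  obtain ⟨δ₀, δ₁, hδ⟩ := exists_pair_ne θ.ord.ToType
  -- otherwise strict supersets avoiding `δ₀` would form a chain avoiding `δ₀`
  obtain ⟨s₀, hs₀⟩ : ∃ s₀ : Finset ℕ, ∀ t, s₀ ⊂ t → d t = δ₀ := by
    by_contra! hne
    choose F hF hFd using hne
    obtain ⟨n, hn⟩ := hd.exists_iterate_succ_eq hF ∅ δ₀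
    exact hFd _ (by rwa [iterate_succ_apply'] at hn)
  have hgrow (s : Finset ℕ) : ∃ t, s ⊂ t :=
    let ⟨i, hi⟩ := Infinite.exists_notMem_finset s
    ⟨insert i s, Finset.ssubset_insert hi⟩
  choose F hF using hgrow
  obtain ⟨n, hn⟩ := hd.exists_iterate_succ_eq hF s₀ δ₁
  exact hδ ((hs₀ _ (strictMono_iterate_of_forall_lt hF s₀ n.succ_pos)).symm.trans hn)

/-- Along the chain `j ↦ {i | i < j}` of colours, each colour `δ` is taken at some non-minimal
`j`: an injective self-map of the finite colour set missing its least element. -/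
theorem not_Pl_self_of_lt_aleph0 {κ : Cardinal.{0}} (hκ : κ < ℵ₀) : ¬ Pl κ κ := by
  intro h
  classical
  obtain ⟨d, hd⟩ := h.exists_isPlColoring (I := κ.ord.ToType) (mk_ord_toType κ).le
  have : Nonempty κ.ord.ToType := ⟨d ∅⟩
  have : Finite κ.ord.ToType := lt_aleph0_iff_finite.1 (by rwa [mk_ord_toType])
  have := Fintype.ofFinite κ.ord.ToType
  have hs : StrictMono fun j : κ.ord.ToType => (Set.Iio j).toFinset := fun i j hij =>
    Set.toFinset_ssubset_toFinset.2 (Set.Iio_ssubset_Iio_iff.2 hij)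
  choose i F hiF hF using hd.exists_lt_apply_eq hs (mk_ord_toType κ)
  have hFinj : Injective F := fun δ δ' h => (hF δ).symm.trans (h ▸ hF δ')
  obtain ⟨j₀, hj₀⟩ := Finite.exists_min (id : κ.ord.ToType → κ.ord.ToType)
  obtain ⟨δ, rfl⟩ := Finite.surjective_of_injective hFinj j₀
  exact (hiF δ).not_ge (hj₀ _)

theorem exists_isFS2Coloring_of_finite {G C : Type u} [Add G] [IsLeftCancelAdd G]
    [Finite G] [Nonempty C] (hC : #C < #G) : ∃ c : G → C, IsFS2Coloring c := by
  obtain ⟨g₀⟩ : Nonempty G := mk_ne_zero_iff.1 (pos_of_gt hC).ne'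
  obtain ⟨e⟩ : Nonempty (C ↪ ({g₀}ᶜ : Set G)) := by
    have hG : #({g₀}ᶜ : Set G) + 1 = #G := by rw [← mk_sum_compl {g₀}, mk_singleton, add_comm]
    exact (le_def _ _).1 (add_one_le_add_one_iff.1 (hG ▸ add_one_le_of_lt hC))
  set σ : C → G := fun δ => g₀ + e δ
  have hσ : Injective σ := fun δ δ' h => e.injective (Subtype.ext (add_left_cancel h))
  refine ⟨invFun σ, fun X hX δ => ?_⟩
  obtain rfl : X = Set.univ := (Set.eq_univ_iff_ncard X).2 (congrArg Cardinal.toNat hX)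
  exact ⟨g₀, trivial, e δ, trivial, fun h => (e δ).2 h.symm, leftInverse_invFun hσ δ⟩

theorem Finsupp.exists_zsmul_eq_and_support_subset {ι A : Type*} [AddCommGroup A] [DivisibleBy A ℤ]
    (w : ι →₀ A) {n : ℤ} (hn : n ≠ 0) : ∃ v : ι →₀ A, n • v = w ∧ v.support ⊆ w.support := by
  classical
  refine ⟨w.mapRange (fun a => if a = 0 then 0 else DivisibleBy.div a n) (if_pos rfl), ?_,
    Finsupp.support_mapRange⟩
  ext j
  by_cases hj : w j = 0 <;> simp [hj, DivisibleBy.div_cancel _ hn]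

section Embedding

variable {H A : Type*} [AddCommGroup H] [AddCommGroup A]

noncomputable abbrev graphDom (Γ : AddSubgroup (H × (H →₀ A))) : AddSubgroup H :=
  Γ.map (AddMonoidHom.fst H (H →₀ A))

theorem mem_graphDom {Γ : AddSubgroup (H × (H →₀ A))} {x : H} :
    x ∈ graphDom Γ ↔ ∃ e, (x, e) ∈ Γ := by
  simp [graphDom]

/-- `Γ` is the graph of an injective homomorphism from a subgroup of `H` to `H →₀ A` whose values
are supported in its domain, so that the coordinate of a new element is still free. -/
structure IsEmbeddingGraph (Γ : AddSubgroup (H × (H →₀ A))) : Prop where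
  functional : ∀ e, ((0 : H), e) ∈ Γ → e = 0
  injective : ∀ x, (x, (0 : H →₀ A)) ∈ Γ → x = 0
  support_subset : ∀ p ∈ Γ, ∀ j ∈ p.2.support, j ∈ graphDom Γ

theorem isEmbeddingGraph_bot : IsEmbeddingGraph (⊥ : AddSubgroup (H × (H →₀ A))) where
  functional e he := by simpa using he
  injective x hx := by simpa using hx
  support_subset p hp j hj := by simp_all

theorem isEmbeddingGraph_sSup {c : Set (AddSubgroup (H × (H →₀ A)))}
    (hc : ∀ Γ ∈ c, IsEmbeddingGraph Γ) (hchain : IsChain (· ≤ ·) c) (hne : c.Nonempty) : IsEmbeddingGraph (sSup c) := by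
  have hmem {p} : p ∈ sSup c ↔ ∃ Γ ∈ c, p ∈ Γ :=
    AddSubgroup.mem_sSup_of_directedOn hne hchain.directedOn
  refine ⟨fun e he => ?_, fun x hx => ?_, fun p hp j hj => ?_⟩
  · obtain ⟨Γ, hΓ, he⟩ := hmem.1 he
    exact (hc Γ hΓ).functional e he
  · obtain ⟨Γ, hΓ, hx⟩ := hmem.1 hx
    exact (hc Γ hΓ).injective x hx
  · obtain ⟨Γ, hΓ, hp⟩ := hmem.1 hp
    exact AddSubgroup.map_mono (le_sSup hΓ) ((hc Γ hΓ).support_subset p hp j hj)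

namespace IsEmbeddingGraph

variable {Γ : AddSubgroup (H × (H →₀ A))}

theorem apply_eq_zero (hΓ : IsEmbeddingGraph Γ) {p : H × (H →₀ A)} (hp : p ∈ Γ) {h : H}
    (hh : h ∉ graphDom Γ) : p.2 h = 0 :=
  Finsupp.notMem_support_iff.1 fun hj => hh (hΓ.support_subset p hp h hj)

theorem sup_zmultiples (hΓ : IsEmbeddingGraph Γ) {h : H} (hh : h ∉ graphDom Γ) {v : H →₀ A}
    (hcompat : ∀ k : ℤ, k • h ∈ graphDom Γ → k • (h, v) ∈ Γ)
    (hord : ∀ k : ℤ, k • v h = 0 → k • h ∈ graphDom Γ)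
    (hsupp : ∀ j ∈ v.support, j ∈ graphDom Γ ∨ j = h) :
    IsEmbeddingGraph (Γ ⊔ AddSubgroup.zmultiples (h, v)) := by
  classical
  have hmem {q} : q ∈ Γ ⊔ AddSubgroup.zmultiples (h, v) ↔ ∃ p ∈ Γ, ∃ k : ℤ, p + k • (h, v) = q := by
    simp only [AddSubgroup.mem_sup, AddSubgroup.mem_zmultiples_iff]
    constructor
    · rintro ⟨p, hp, _, ⟨k, rfl⟩, rfl⟩
      exact ⟨p, hp, k, rfl⟩
    · rintro ⟨p, hp, k, rfl⟩
      exact ⟨p, hp, _, ⟨k, rfl⟩, rfl⟩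
  refine ⟨fun e he => ?_, fun x hx => ?_, fun q hq j hj => ?_⟩
  · obtain ⟨p, hp, k, hpk⟩ := hmem.1 he
    have hk : k • h ∈ graphDom Γ := by
      have h₁ : p.1 + k • h = 0 := congrArg Prod.fst hpk
      rw [eq_neg_of_add_eq_zero_right h₁]
      exact neg_mem (AddSubgroup.mem_map_of_mem _ hp)
    exact hΓ.functional e (hpk ▸ Γ.add_mem hp (hcompat k hk))
  · obtain ⟨p, hp, k, hpk⟩ := hmem.1 hx
    have hk : k • v h = 0 := by
      simpa [hΓ.apply_eq_zero hp hh] using congrArg (fun q => q.2 h) hpk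
    exact hΓ.injective x (hpk ▸ Γ.add_mem hp (hcompat k (hord k hk)))
  · obtain ⟨p, hp, k, rfl⟩ := hmem.1 hq
    have hle : graphDom Γ ≤ graphDom (Γ ⊔ AddSubgroup.zmultiples (h, v)) :=
      AddSubgroup.map_mono le_sup_left
    rcases Finset.mem_union.1 (Finsupp.support_add hj) with hj | hj
    · exact hle (hΓ.support_subset p hp j hj)
    · rcases hsupp j (Finsupp.support_smul hj) with hj | rfl
      · exact hle hj
      · exact mem_graphDom.2 ⟨v, AddSubgroup.mem_sup_right (AddSubgroup.mem_zmultiples _)⟩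

/-- `h` is sent to `v₀ + single h a`, where `m` is the order of `h` modulo the domain, `m • v₀` is
the value at `m • h` and `a` has order `m`. -/
theorem exists_gt [DivisibleBy A ℤ] (hA : ∀ n : ℕ, ∃ a : A, addOrderOf a = n)
    (hΓ : IsEmbeddingGraph Γ) {h : H} (hh : h ∉ graphDom Γ) :
    ∃ Γ', Γ ≤ Γ' ∧ IsEmbeddingGraph Γ' ∧ h ∈ graphDom Γ' := by
  classical
  set m := addOrderOf (h : H ⧸ graphDom Γ)
  have hm (k : ℤ) : k • h ∈ graphDom Γ ↔ (m : ℤ) ∣ k := by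
    rw [addOrderOf_dvd_iff_zsmul_eq_zero, ← QuotientAddGroup.mk_zsmul,
      QuotientAddGroup.eq_zero_iff]
  obtain ⟨a, ha⟩ := hA m
  obtain ⟨w, hw⟩ := mem_graphDom.1 ((hm m).2 dvd_rfl)
  have hwsupp : ∀ j ∈ w.support, j ∈ graphDom Γ := hΓ.support_subset _ hw
  obtain ⟨v₀, hv₀, hv₀supp⟩ : ∃ v₀ : H →₀ A, (m : ℤ) • v₀ = w ∧ v₀.support ⊆ w.support := by
    rcases eq_or_ne (m : ℤ) 0 with hm0 | hm0
    · refine ⟨0, ?_, by simp⟩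
      rw [hm0, zero_smul] at hw
      rw [hΓ.functional w hw, smul_zero]
    · exact w.exists_zsmul_eq_and_support_subset hm0
  set v := v₀ + Finsupp.single h a
  have hv₀h : v₀ h = 0 := Finsupp.notMem_support_iff.1 fun hj => hh (hwsupp h (hv₀supp hj))
  have hma : (m : ℤ) • a = 0 := by rw [natCast_zsmul, ← ha, addOrderOf_nsmul_eq_zero]
  have hmv : (m : ℤ) • v = w := by
    rw [smul_add, hv₀, Finsupp.smul_single, hma, Finsupp.single_zero, add_zero]
  refine ⟨_, le_sup_left, hΓ.sup_zmultiples hh (fun k hk => ?_) (fun k hk => ?_) (fun j hj => ?_),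
    mem_graphDom.2 ⟨v, AddSubgroup.mem_sup_right (AddSubgroup.mem_zmultiples _)⟩⟩
  · obtain ⟨s, rfl⟩ := (hm k).1 hk
    rw [mul_comm, mul_smul, show (m : ℤ) • (h, v) = ((m : ℤ) • h, w) from Prod.ext rfl hmv]
    exact Γ.zsmul_mem hw s
  · rw [Finsupp.add_apply, hv₀h, zero_add, Finsupp.single_eq_same,
      ← addOrderOf_dvd_iff_zsmul_eq_zero, ha] at hk
    exact (hm k).2 hk
  · rcases Finset.mem_union.1 (Finsupp.support_add hj) with hj | hj
    · exact Or.inl (hwsupp j (hv₀supp hj))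
    · exact Or.inr (Finset.mem_singleton.1 (Finsupp.support_single_subset hj))

end IsEmbeddingGraph

theorem exists_injective_addMonoidHom_finsupp [DivisibleBy A ℤ]
    (hA : ∀ n : ℕ, ∃ a : A, addOrderOf a = n) : ∃ φ : H →+ (H →₀ A), Injective φ := by
  obtain ⟨Γ, -, hmax⟩ := zorn_le_nonempty₀ {Γ : AddSubgroup (H × (H →₀ A)) | IsEmbeddingGraph Γ}
    (fun c hc hchain Γ hΓ => ⟨sSup c, isEmbeddingGraph_sSup hc hchain ⟨Γ, hΓ⟩, fun _ => le_sSup⟩)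
    ⊥ isEmbeddingGraph_bot
  have hΓ : IsEmbeddingGraph Γ := hmax.prop
  have hdom (x : H) : ∃ e, (x, e) ∈ Γ := by
    rw [← mem_graphDom]
    by_contra hx
    obtain ⟨Γ', hle, hΓ', hx'⟩ := hΓ.exists_gt hA hx
    exact hx (AddSubgroup.map_mono (hmax.2 hΓ' hle) hx')
  choose φ hφ using hdom
  have hadd (x y : H) : φ (x + y) = φ x + φ y := sub_eq_zero.1 <| hΓ.functional _ <| by
    simpa using Γ.sub_mem (hφ (x + y)) (Γ.add_mem (hφ x) (hφ y))
  refine ⟨AddMonoidHom.mk' φ hadd, fun x y hxy => sub_eq_zero.1 (hΓ.injective _ ?_)⟩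
  simpa [show φ x = φ y from hxy] using Γ.sub_mem (hφ x) (hφ y)

end Embedding

theorem exists_addOrderOf_eq_rat_addCircle (n : ℕ) :
    ∃ a : ℚ × AddCircle (1 : ℚ), addOrderOf a = n := by
  rcases Nat.eq_zero_or_pos n with rfl | hn
  · exact ⟨(1, 0), addOrderOf_eq_zero_iff'.2 fun k hk => by simp [Prod.ext_iff, hk.ne']⟩
  · refine ⟨(0, ((1 / n : ℚ) : AddCircle (1 : ℚ))), ?_⟩
    rw [Prod.addOrderOf, addOrderOf_zero, AddCircle.addOrderOf_period_div hn, Nat.lcm_one_left]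

instance inst_s13 : Countable (AddCircle (1 : ℚ)) := Quotient.countable

section Grothendieck

variable {G : Type u} [AddCommSemigroup G]

open Algebra in
/-- Adjoining a zero may destroy cancellativity (when `G` already has a neutral element), but the
composite map into the Grothendieck group stays injective. -/
theorem injective_grothendieckAddGroup_of_withZero [IsLeftCancelAdd G] :
    Injective fun g : G => GrothendieckAddGroup.of (g : WithZero G) := by
  intro x y hxy
  obtain ⟨⟨c, hc₀⟩, hc⟩ := (AddLocalization.addMonoidOf ⊤).eq_iff_exists.1 hxy
  change c + x = c + y at hc
  clear hc₀
  revert hc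
  induction c using WithZero.recZeroCoe with
  | zero => simp
  | coe c => simp [← WithZero.coe_add]

theorem mk_grothendieckAddGroup_withZero_le (hG : ℵ₀ ≤ #G) :
    #(Algebra.GrothendieckAddGroup (WithZero G)) ≤ #G :=
  (AddLocalization.cardinalMk_le ⊤).trans_eq ((mk_option (α := G)).trans (add_one_eq hG))

end Grothendieck

theorem mk_image_eq_of_countable_preimage {α β : Type u} {f : α → β}
    (hf : ∀ b, (f ⁻¹' {b}).Countable) {X : Set α} (hX : ℵ₀ < #X) : #(f '' X) = #X := by
  refine le_antisymm mk_image_le (not_lt.1 fun hlt => ?_)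
  have hfib (b : f '' X) : #(X.imageFactorization f ⁻¹' {b}) ≤ ℵ₀ :=
    ((hf b).preimage Subtype.val_injective).mono (fun x hx => congrArg Subtype.val hx) |>.le_aleph0
  exact ((mk_le_mk_mul_of_mk_preimage_le _ hfib).trans_lt (mul_lt_of_lt hX.le hlt hX)).false

theorem Finsupp.countable_setOf_support_eq {ι A : Type*} [Zero A] [Countable A] (s : Finset ι) :
    {e : ι →₀ A | e.support = s}.Countable := by
  refine Set.MapsTo.countable_of_injOn (f := fun e (j : s) => e j) (Set.mapsTo_univ _ _)
    (fun e he e' he' hee' => Finsupp.ext fun j => ?_) Set.countable_univ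
  by_cases hj : j ∈ s
  · exact congrFun hee' ⟨j, hj⟩
  · rw [Finsupp.notMem_support_iff.1 (he ▸ hj), Finsupp.notMem_support_iff.1 (he' ▸ hj)]

theorem Finsupp.symmDiff_support_subset_support_add {ι A : Type*} [DecidableEq ι] [AddZeroClass A]
    (e f : ι →₀ A) : symmDiff e.support f.support ⊆ (e + f).support := by
  intro j hj
  rcases Finset.mem_symmDiff.1 hj with ⟨he, hf⟩ | ⟨hf, he⟩
  · simpa [Finsupp.notMem_support_iff.1 hf] using he
  · simpa [Finsupp.notMem_support_iff.1 he] using hf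

theorem IsPlColoring.isFS2Coloring_support {G I A C : Type} [Add G] [DecidableEq I]
    [AddZeroClass A] [Countable A] {d : Finset I → C} (hd : IsPlColoring #G d) {ψ : G → I →₀ A}
    (hψ : Injective ψ) (hψadd : ∀ x y, ψ (x + y) = ψ x + ψ y) (hG : ℵ₀ < #G) :
    IsFS2Coloring fun g => d (ψ g).support := by
  intro X hX δ
  have hu : #((fun g => (ψ g).support) '' X) = #G :=
    (mk_image_eq_of_countable_preimage
      (fun s => (Finsupp.countable_setOf_support_eq s).preimage hψ) (hX ▸ hG)).trans hX
  obtain ⟨_, ⟨x, hx, rfl⟩, _, ⟨y, hy, rfl⟩, hxy, hd'⟩ := hd _ hu δ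
  refine ⟨x, hx, y, hy, ne_of_apply_ne (fun g => (ψ g).support) hxy, hd' _ ?_ ?_⟩
  · rw [hψadd]
    exact Finsupp.symmDiff_support_subset_support_add _ _
  · rw [hψadd]
    exact Finsupp.support_add

theorem exists_isFS2Coloring_of_aleph0_lt {G : Type} [AddCommSemigroup G] [IsLeftCancelAdd G]
    {θ : Cardinal.{0}} (hG : ℵ₀ < #G) (h : Pl #G θ) : ∃ c : G → θ.ord.ToType, IsFS2Coloring c := by
  classical
  set H := Algebra.GrothendieckAddGroup (WithZero G)
  obtain ⟨φ, hφ⟩ :=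
    exists_injective_addMonoidHom_finsupp (H := H) exists_addOrderOf_eq_rat_addCircle
  obtain ⟨d, hd⟩ := h.exists_isPlColoring (mk_grothendieckAddGroup_withZero_le hG.le)
  refine ⟨_, hd.isFS2Coloring_support (hφ.comp injective_grothendieckAddGroup_of_withZero)
    (fun x y => ?_) hG⟩
  simp [WithZero.coe_add]

theorem stmt_13 {G : Type} [AddCommSemigroup G]
    (hcancel : ∀ a b c : G, a + c = b + c → a = b)
    (θ : Cardinal.{0}) (hθ : θ ≤ Cardinal.mk G)
    (h : Pl (Cardinal.mk G) θ) :
    -- `G ↛ [κ]^{FS₂}_θ` where `κ = |G|`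
    ∃ c : G → θ.ord.ToType,
      ∀ X : Set G, Cardinal.mk X = Cardinal.mk G →
        ∀ δ : θ.ord.ToType, ∃ x ∈ X, ∃ y ∈ X, x ≠ y ∧ c (x + y) = δ := by
  have : IsRightCancelAdd G := ⟨fun a b c => hcancel b c a⟩
  have := AddCommMagma.IsRightCancelAdd.toIsLeftCancelAdd G
  have := h.nonempty
  rcases lt_trichotomy #G ℵ₀ with hfin | hω | hunc
  · have : Finite G := lt_aleph0_iff_finite.1 hfin
    rcases hθ.lt_or_eq with hlt | rfl
    · exact exists_isFS2Coloring_of_finite (by rwa [mk_ord_toType])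
    · exact absurd h (not_Pl_self_of_lt_aleph0 hfin)
  · rcases le_or_gt θ 1 with hθ₁ | hθ₁
    · have : Subsingleton θ.ord.ToType := le_one_iff_subsingleton.1 (by rwa [mk_ord_toType])
      refine ⟨fun _ => Classical.arbitrary _, ?_⟩
      exact isFS2Coloring_of_subsingleton (fun _ : G => Classical.arbitrary θ.ord.ToType)
        (hω ▸ one_lt_aleph0)
    · exact absurd (hω ▸ h) (not_Pl_aleph0 hθ₁)
  · exact exists_isFS2Coloring_of_aleph0_lt hunc h
end

section
/- Let n be a positive integer and let G be an n-divisible abelian group, i.e. for every x ∈ G there exists z ∈ G with n·z = x. Let λ be an infinite cardinal and θ a cardinal, and suppose the colouring c : G → θ witnesses G ↛ [λ]^{FSₙ}_θ, i.e. for every X ⊆ G of cardinality λ, c takes every value below θ on FSₙ(X). Then c also witnesses G ↛ [λ]^{FS_{n+1}}_θ, i.e. for every X ⊆ G of cardinality λ, c takes every value below θ on FS_{n+1}(X). -/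
/-!
Pick `a ∈ X` and `w` with `n • w = a`. The translate `Y = (X \ {a}) + w` still has cardinality
`λ`, so the colouring takes the value `δ` on the sum of some `n` distinct elements `yᵢ` of `Y`.
Then `a` together with the `yᵢ - w` are `n + 1` distinct elements of `X` whose sum is
`a - n • w + ∑ yᵢ = ∑ yᵢ`.
-/

open Cardinal

universe u

theorem Cardinal.mk_sdiff_singleton_of_aleph0_le {α : Type*} {s : Set α} (hs : ℵ₀ ≤ #s)
    (a : α) : #(s \ {a} : Set α) = #s := by
  by_cases ha : a ∈ s
  · refine eq_of_add_eq_of_aleph0_le (a := #({a} : Set α)) ?_ ?_ hs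
    · rw [add_comm]
      exact mk_sdiff_add_mk (Set.singleton_subset_iff.2 ha)
    · rw [mk_singleton]
      exact one_lt_aleph0.trans_le hs
  · rw [Set.sdiff_singleton_eq_self ha]

theorem Fin.sum_cons_sub {G : Type*} [AddCommGroup G] {n : ℕ} (a w : G) (y : Fin n → G) :
    ∑ i, (Fin.cons a fun i ↦ y i - w : Fin (n + 1) → G) i = a - n • w + ∑ i, y i := by
  rw [Fin.sum_cons, Finset.sum_sub_distrib, Finset.sum_const, Finset.card_univ, Fintype.card_fin]
  abel

theorem stmt_14_general {G : Type u} [AddCommGroup G] (n : ℕ)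
    (hdiv : ∀ x : G, ∃ z : G, n • z = x)
    (lam θ : Cardinal.{u}) (hlam : ℵ₀ ≤ lam)
    (c : G → θ.ord.ToType)
    (hyp : ∀ X : Set G, Cardinal.mk X = lam →
      ∀ δ : θ.ord.ToType, ∃ x : Fin n → G, Function.Injective x ∧
        (∀ i, x i ∈ X) ∧ c (∑ i, x i) = δ) :
    ∀ X : Set G, Cardinal.mk X = lam →
      ∀ δ : θ.ord.ToType, ∃ x : Fin (n + 1) → G, Function.Injective x ∧
        (∀ i, x i ∈ X) ∧ c (∑ i, x i) = δ := by
  intro X hX δ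
  have hXinf : ℵ₀ ≤ #X := hX ▸ hlam
  obtain ⟨a, ha⟩ : X.Nonempty :=
    Set.nonempty_coe_sort.1 (mk_ne_zero_iff.1 (aleph0_pos.trans_le hXinf).ne')
  obtain ⟨w, rfl⟩ := hdiv a
  have hY : #((· - w) ⁻¹' (X \ {n • w}) : Set G) = lam := by
    rw [← hX, ← mk_sdiff_singleton_of_aleph0_le hXinf (n • w)]
    exact mk_preimage_equiv (Equiv.subRight w) _
  obtain ⟨y, hy, hyY, hyδ⟩ := hyp _ hY δ
  refine ⟨Fin.cons (n • w) fun i ↦ y i - w, ?_, Fin.cases ha fun i ↦ (hyY i).1, ?_⟩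
  · exact Fin.cons_injective_iff.2
      ⟨fun ⟨i, hi⟩ ↦ (hyY i).2 hi, (sub_left_injective (b := w)).comp hy⟩
  · rwa [Fin.sum_cons_sub, sub_self, zero_add]

theorem stmt_14 {G : Type u} [AddCommGroup G] (n : ℕ) (hn : 0 < n)
    (hdiv : ∀ x : G, ∃ z : G, n • z = x)
    (lam θ : Cardinal.{u}) (hlam : ℵ₀ ≤ lam)
    (c : G → θ.ord.ToType)
    (hyp : ∀ X : Set G, Cardinal.mk X = lam →
      ∀ δ : θ.ord.ToType, ∃ x : Fin n → G, Function.Injective x ∧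
        (∀ i, x i ∈ X) ∧ c (∑ i, x i) = δ) :
    ∀ X : Set G, Cardinal.mk X = lam →
      ∀ δ : θ.ord.ToType, ∃ x : Fin (n + 1) → G, Function.Injective x ∧
        (∀ i, x i ∈ X) ∧ c (∑ i, x i) = δ :=
  stmt_14_general n hdiv lam θ hlam c hyp
end
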